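/- Let E be a directed graph with a vertex v at which there is exactly one closed simple path λ, and let w be any vertex lying on λ (i.e., w = s(e_i) for some edge e_i of λ = e₁⋯eₙ). If f is an edge with s(f) = w and f is not an edge of λ, then r(f) does not lie on λ; i.e., r(f) ∉ {s(e₁), …, s(eₙ)}. -/

import Mathlib

/-!
If an exit `f` of `λ` went from `s lᵢ` back to a vertex `s lⱼ` of `λ`, it could be spliced into
`λ`: follow `λ` up to `lᵢ`, take `f`, and continue along `λ` after an edge of `λ` ending at
`r f`. The result is again a closed simple path at `v`, and it contains `f`, contradicting
uniqueness. Cutting and gluing become list algebra once a walk from `x` to `y` is encoded by the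
single equation `l.map s ++ [y] = x :: l.map r`.
-/

/-- A path in a directed graph with edge set `E`, vertex set `V` and
source/range maps `s r : E → V` is a list of edges in which consecutive edges
are composable. -/
def IsGraphPath {V E : Type*} (s r : E → V) (es : List E) : Prop :=
  es.Chain' fun e f => r e = s f

/-- A closed path based at `v`: a nonempty path starting and ending at `v`. -/
structure IsClosedPath {V E : Type*} (s r : E → V) (v : V) (es : List E) : Prop where
  ne : es ≠ []
  path : IsGraphPath s r es
  src : ∀ h : es ≠ [], s (es.head h) = v
  rng : ∀ h : es ≠ [], r (es.getLast h) = v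

/-- A closed simple path based at `v`: a closed path `e₁⋯eₙ` based at `v` such
that `s eᵢ ≠ v` for `i = 2, …, n`. -/
def IsClosedSimplePath {V E : Type*} (s r : E → V) (v : V) (es : List E) : Prop :=
  IsClosedPath s r v es ∧ ∀ i (h : i < es.length), 0 < i → s es[i] ≠ v

def IsWalk {V E : Type*} (s r : E → V) (x y : V) (l : List E) : Prop :=
  l.map s ++ [y] = x :: l.map r

section

variable {V E : Type*} {s r : E → V} {v x y z : V} {l p q u t : List E} {a b e f : E}

@[simp]
theorem isWalk_nil : IsWalk s r x y [] ↔ y = x := by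
  simp [IsWalk]

@[simp]
theorem isWalk_cons : IsWalk s r x y (e :: l) ↔ s e = x ∧ IsWalk s r (r e) y l := by
  simp [IsWalk]

theorem isWalk_append : IsWalk s r x z (p ++ q) ↔ ∃ y, IsWalk s r x y p ∧ IsWalk s r y z q := by
  induction p generalizing x with
  | nil => simp
  | cons e p ih => simp [ih, and_assoc]

theorem isGraphPath_iff_isChain : IsGraphPath s r l ↔ l.IsChain fun e f => r e = s f := Iff.rfl

theorem isWalk_append_cons :
    IsWalk s r x z (p ++ e :: q) ↔ IsWalk s r x (s e) p ∧ IsWalk s r (r e) z q := by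
  simp [isWalk_append]

theorem isWalk_cons_iff_isGraphPath :
    IsWalk s r x y (e :: l) ↔
      s e = x ∧ IsGraphPath s r (e :: l) ∧ r ((e :: l).getLast (List.cons_ne_nil e l)) = y := by
  induction l generalizing e x with
  | nil => simp [isGraphPath_iff_isChain, eq_comm]
  | cons e' l ih =>
    rw [isWalk_cons, ih]
    simp [isGraphPath_iff_isChain, eq_comm, and_assoc]

theorem isClosedPath_iff : IsClosedPath s r v l ↔ l ≠ [] ∧ IsWalk s r v v l := by
  cases l with
  | nil => exact ⟨fun h => absurd rfl h.ne, fun h => absurd rfl h.1⟩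
  | cons e l =>
    rw [isWalk_cons_iff_isGraphPath]
    exact ⟨fun h => ⟨h.ne, h.src h.ne, h.path, h.rng h.ne⟩,
      fun ⟨hne, hsrc, hpath, hrng⟩ => ⟨hne, hpath, fun _ => hsrc, fun _ => hrng⟩⟩

theorem isClosedSimplePath_iff :
    IsClosedSimplePath s r v l ↔ IsClosedPath s r v l ∧ ∀ e ∈ l.tail, s e ≠ v := by
  cases l with
  | nil => simp [IsClosedSimplePath]
  | cons e l =>
    simp only [IsClosedSimplePath, List.tail_cons, List.forall_mem_iff_getElem, and_congr_right_iff]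
    refine fun _ => ⟨fun h i hi => h (i + 1) (by simpa) i.succ_pos, fun h i hi hpos => ?_⟩
    obtain ⟨k, rfl⟩ := Nat.exists_eq_add_one_of_ne_zero hpos.ne'
    exact h k (by simpa using hi)

theorem IsClosedPath.exists_range_eq_source (hl : IsClosedPath s r v l) (he : e ∈ l) :
    ∃ b ∈ l, r b = s e := by
  obtain ⟨hne, hwalk⟩ := isClosedPath_iff.1 hl
  have : s e ∈ v :: l.map r := hwalk ▸ List.mem_append_left _ (List.mem_map_of_mem he)
  rcases List.mem_cons.1 this with hv | hr
  · exact ⟨l.getLast hne, l.getLast_mem hne, (hl.rng hne).trans hv.symm⟩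
  · simpa [eq_comm] using hr

theorem IsClosedSimplePath.splice (hl : IsClosedSimplePath s r v l) (hp : l = p ++ a :: q)
    (ht : l = u ++ b :: t) (hsf : s f = s a) (hrf : r f = r b) :
    IsClosedSimplePath s r v (p ++ f :: t) := by
  rw [isClosedSimplePath_iff, isClosedPath_iff] at hl ⊢
  obtain ⟨⟨-, hwalk⟩, hsimple⟩ := hl
  refine ⟨⟨by simp, ?_⟩, ?_⟩
  · have hvp := (isWalk_append_cons.1 (hp ▸ hwalk)).1
    have hbt := (isWalk_append_cons.1 (ht ▸ hwalk)).2
    exact isWalk_append_cons.2 ⟨hsf ▸ hvp, hrf ▸ hbt⟩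
  · have ht' : ∀ x ∈ t, s x ≠ v := by
      rw [ht] at hsimple
      cases u with
      | nil => simpa using hsimple
      | cons _ u => exact fun x hx => hsimple x (by simp [hx])
    rw [hp] at hsimple
    cases p with
    | nil => simpa using ht'
    | cons _ p =>
      simp only [List.cons_append, List.tail_cons, List.mem_append, List.mem_cons] at hsimple ⊢
      rintro x (hx | rfl | hx)
      · exact hsimple x (.inl hx)
      · exact hsf ▸ hsimple a (.inr (.inl rfl))
      · exact ht' x hx

end

/-- Let `l = e₁⋯eₙ` be the unique closed simple path based at
`v`, let `w = s eᵢ` be a vertex on `l`, and let `f` be an edge with `s f = w`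
that is not an edge of `l`. Then `r f` does not lie on `l`:
`r f ∉ {s e₁, …, s eₙ}`. -/
theorem exit_range_avoids_unique_cycle
    {V E : Type*} (s r : E → V) (v : V) (l : List E)
    (hl : IsClosedSimplePath s r v l)
    (huniq : ∀ m : List E, IsClosedSimplePath s r v m → m = l)
    (i : ℕ) (hi : i < l.length) (f : E) (hsf : s f = s l[i]) (hfl : f ∉ l) :
    ∀ j (hj : j < l.length), r f ≠ s l[j] := by
  intro j hj hrf
  obtain ⟨b, hb, hrb⟩ := hl.1.exists_range_eq_source (l.getElem_mem hj)
  obtain ⟨p, q, hpq⟩ := List.mem_iff_append.1 (l.getElem_mem hi)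
  obtain ⟨u, t, hut⟩ := List.mem_iff_append.1 hb
  have hspliced := hl.splice hpq hut hsf (hrf.trans hrb.symm)
  exact hfl (huniq _ hspliced ▸ List.mem_append_right p List.mem_cons_self)
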